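/- Fix integers k ≥ 2 and d ≥ 3 and set L := (k−1)(d−1). There exist constants C > 0 and θ₀ ∈ (0, 1 − 1/L), depending only on d and k, such that for every θ ∈ (0, θ₀] and every p ∈ [0, θ], one has W(p) − R(p) ≥ c·(θ−p)·(d−1)·(p^{(k−1)(d−2)} − C·p^L). -/

import Mathlib

/-!
For `p < θ` the fixed-point equation `R = p + (1 - p) R^L` collapses `W(p) - R(p)` to
`c (θ - p) (abamo(q, d - 1) - R^L)` with `q = p^(k-1)`, and
`abamo(q, d - 1) = (d - 1) q^(d-2) - (d - 2) p^L`. Strict convexity of `x ↦ x^L` shows that the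
root `R(p)` in `[0, 1)` lies below `2p` for small `p`, so `R^L ≤ 2^L p^L` and `C = 2^L`,
`θ₀ = 1/4` work. At `p = θ` both sides vanish.
-/

open Real Set

lemma le_two_mul_of_eq_add_mul_pow {L : ℕ} (hL : 2 ≤ L) {p r : ℝ} (hp0 : 0 ≤ p) (hp : p < 1 / 4)
    (hr1 : r < 1) (hr : r = p + (1 - p) * r ^ L) : r ≤ 2 * p := by
  by_contra! h2p
  obtain ⟨a, b, ha, hb, hab, rfl⟩ : r ∈ openSegment ℝ (2 * p) 1 := by
    rw [openSegment_eq_Ioo (by linarith)]; exact ⟨h2p, hr1⟩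
  simp only [smul_eq_mul, mul_one] at hr
  have hchord : (a * (2 * p) + b) ^ L < a * (2 * p) ^ L + b := by
    simpa using (strictConvexOn_pow hL).2 (mem_Ici.2 (by linarith : (0:ℝ) ≤ 2 * p))
      (mem_Ici.2 zero_le_one) (by linarith : 2 * p ≠ 1) ha hb hab
  have hroot : a * p < a * ((1 - p) * (2 * p) ^ L) := by
    nlinarith [mul_lt_mul_of_pos_left hchord (by linarith : 0 < 1 - p)]
  have hpow : (2 * p) ^ L ≤ (2 * p) ^ 2 := pow_le_pow_of_le_one (by linarith) (by linarith) hL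
  have := lt_of_mul_lt_mul_left hroot ha.le
  nlinarith [pow_nonneg (by linarith : 0 ≤ 2 * p) L]

lemma two_sub_logb_two_three_pos : 0 < 2 - logb 2 3 := by
  have : logb 2 3 < 2 := (logb_lt_iff_lt_rpow (by norm_num) (by norm_num)).2 (by norm_num)
  linarith

lemma le_abamo_sub {m : ℕ} {q t C : ℝ} (hq : 0 ≤ q) (hC : 1 ≤ C) (ht : t ≤ C * q ^ (m + 1)) :
    (m + 1) * (q ^ m - C * q ^ (m + 1)) ≤ q ^ (m + 1) + (m + 1) * (1 - q) * q ^ m - t := by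
  have habamo : q ^ (m + 1) + (m + 1) * (1 - q) * q ^ m = (m + 1) * q ^ m - m * q ^ (m + 1) := by
    ring
  rw [habamo]
  linarith [mul_le_mul_of_nonneg_left hC (by positivity : (0 : ℝ) ≤ m * q ^ (m + 1))]

theorem stmt_9_general (k d : ℕ) (hk : 2 ≤ k) (hd : 3 ≤ d) (L : ℕ) (hL : L = (k-1)*(d-1))
    (R : ℝ → ℝ)
    (hR : ∀ p : ℝ, 0 ≤ p → p < 1 - 1/(L:ℝ) →
      R p ∈ Set.Ico (0:ℝ) 1 ∧ R p = p + (1-p) * (R p)^L)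
    (W : ℝ → ℝ → ℝ)
    (hW : ∀ θ p : ℝ,
      (0 ≤ p → p < θ →
        W θ p = p
          + (2 - Real.logb 2 3) * (θ - p) *
              ((p^(k-1))^(d-1) + ((d:ℝ)-1) * (1 - p^(k-1)) * (p^(k-1))^(d-2))
          + (1 - p - (2 - Real.logb 2 3) * (θ - p)) * ((R p)^(k-1))^(d-1)) ∧
      (θ ≤ p → p ≤ 1 → W θ p = R p)) :
    ∃ C θ₀ : ℝ, 0 < C ∧ 0 < θ₀ ∧ θ₀ < 1 - 1/(L:ℝ) ∧
      ∀ θ : ℝ, 0 < θ → θ ≤ θ₀ → ∀ p : ℝ, 0 ≤ p → p ≤ θ →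
        W θ p - R p ≥
          (2 - Real.logb 2 3) * (θ - p) * ((d:ℝ)-1) * (p^((k-1)*(d-2)) - C * p^L) := by
  have hL2 : 2 ≤ L := hL ▸ Nat.mul_le_mul (by omega : 1 ≤ k - 1) (by omega : 2 ≤ d - 1)
  have hθ₀ : 1 / 4 < 1 - 1 / (L : ℝ) := by
    have : 1 / (L : ℝ) ≤ 1 / 2 := one_div_le_one_div_of_le two_pos (by exact_mod_cast hL2)
    linarith
  obtain ⟨m, rfl⟩ : ∃ m, d = m + 2 := ⟨d - 2, by omega⟩
  have hpL : ∀ x : ℝ, (x ^ (k - 1)) ^ (m + 1) = x ^ L := fun x => by rw [← pow_mul, hL]; rfl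
  simp only [Nat.add_sub_cancel, show m + 2 - 1 = m + 1 by omega, hpL, pow_mul] at hW ⊢
  refine ⟨2 ^ L, 1 / 4, by positivity, by norm_num, hθ₀, fun θ _ hθ p hp0 hpθ => ?_⟩
  rcases hpθ.lt_or_eq with hpθ | rfl
  · obtain ⟨⟨hr0, hr1⟩, hr⟩ := hR p hp0 (by linarith)
    have hRL : R p ^ L ≤ 2 ^ L * (p ^ (k - 1)) ^ (m + 1) := by
      rw [hpL, ← mul_pow]
      exact pow_le_pow_left₀ hr0 (le_two_mul_of_eq_add_mul_pow hL2 hp0 (by linarith) hr1 hr) L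
    have hbound := le_abamo_sub (pow_nonneg hp0 (k - 1)) (one_le_pow₀ one_le_two) hRL
    rw [hpL] at hbound
    rw [(hW θ p).1 hp0 hpθ, ge_iff_le, show ((m + 2 : ℕ) : ℝ) - 1 = m + 1 by push_cast; ring]
    have hc : 0 ≤ (2 - logb 2 3) * (θ - p) :=
      mul_nonneg two_sub_logb_two_three_pos.le (by linarith)
    linarith [mul_le_mul_of_nonneg_left hbound hc]
  · rw [(hW p p).2 le_rfl (by linarith)]
    simp

/-- With notation as in the paper, there exist constants `C > 0` and
`θ₀ ∈ (0, 1-1/L)`, depending only on `d` and `k`, such that for every `θ ∈ (0, θ₀]`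
and every `p ∈ [0, θ]`,
`W(p) - R(p) ≥ c·(θ-p)·(d-1)·(p^((k-1)(d-2)) - C·p^L)`. -/
theorem stmt_9 (k d : ℕ) (hk : 2 ≤ k) (hd : 3 ≤ d) (L : ℕ) (hL : L = (k-1)*(d-1))
    (R : ℝ → ℝ)
    (hR : ∀ p : ℝ, 0 ≤ p → p < 1 - 1/(L:ℝ) →
      R p ∈ Set.Ico (0:ℝ) 1 ∧ R p = p + (1-p) * (R p)^L)
    (hR1 : ∀ p : ℝ, 1 - 1/(L:ℝ) ≤ p → p ≤ 1 → R p = 1)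
    (W : ℝ → ℝ → ℝ)
    (hW : ∀ θ p : ℝ,
      (0 ≤ p → p < θ →
        W θ p = p
          + (2 - Real.logb 2 3) * (θ - p) *
              ((p^(k-1))^(d-1) + ((d:ℝ)-1) * (1 - p^(k-1)) * (p^(k-1))^(d-2))
          + (1 - p - (2 - Real.logb 2 3) * (θ - p)) * ((R p)^(k-1))^(d-1)) ∧
      (θ ≤ p → p ≤ 1 → W θ p = R p)) :
    ∃ C θ₀ : ℝ, 0 < C ∧ 0 < θ₀ ∧ θ₀ < 1 - 1/(L:ℝ) ∧
      ∀ θ : ℝ, 0 < θ → θ ≤ θ₀ → ∀ p : ℝ, 0 ≤ p → p ≤ θ →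
        W θ p - R p ≥
          (2 - Real.logb 2 3) * (θ - p) * ((d:ℝ)-1) * (p^((k-1)*(d-2)) - C * p^L) :=
  stmt_9_general k d hk hd L hL R hR W hW
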